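/- Assume the family of boundary-value problems L(ε)y = f(·,ε), B(ε)y = q(ε) satisfies the Basic Definition, i.e., its solution is continuous in the parameter ε at ε = 0. Then this family satisfies Limit Conditions (I) and (II): A(·,ε) → A(·,0) in (C^{n,α})^{m×m} and B(ε)y → B(0)y in ℂ^m for every y ∈ (C^{n+1,α})^m, as ε → 0+. -/

import Mathlib

open Set Filter Topology

noncomputable def supIcc (a b : ℝ) (g : ℝ → ℂ) : ℝ :=
  sSup ((fun t => ‖g t‖) '' Set.Icc a b)

noncomputable def cNorm (a b : ℝ) (l : ℕ) (x : ℝ → ℂ) : ℝ :=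
  ∑ j ∈ Finset.range (l + 1), supIcc a b (iteratedDerivWithin j x (Set.Icc a b))

noncomputable def holderSemi (a b α : ℝ) (g : ℝ → ℂ) : ℝ :=
  sSup {r : ℝ | ∃ s ∈ Set.Icc a b, ∃ t ∈ Set.Icc a b, s ≠ t ∧ r = ‖g s - g t‖ / |s - t| ^ α}

noncomputable def holderNorm (a b : ℝ) (l : ℕ) (α : ℝ) (x : ℝ → ℂ) : ℝ :=
  cNorm a b l x +
    (if α = 0 then 0 else holderSemi a b α (iteratedDerivWithin l x (Set.Icc a b)))

def InHolder (a b : ℝ) (l : ℕ) (α : ℝ) (x : ℝ → ℂ) : Prop :=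
  ContDiffOn ℝ l x (Set.Icc a b) ∧
    (α = 0 ∨ ∃ K : ℝ, ∀ s ∈ Set.Icc a b, ∀ t ∈ Set.Icc a b,
      ‖iteratedDerivWithin l x (Set.Icc a b) s - iteratedDerivWithin l x (Set.Icc a b) t‖
        ≤ K * |s - t| ^ α)

def InHolderV (a b : ℝ) (l : ℕ) (α : ℝ) {m : ℕ} (y : ℝ → Fin m → ℂ) : Prop :=
  ∀ i, InHolder a b l α fun t => y t i

noncomputable def holderNormV (a b : ℝ) (l : ℕ) (α : ℝ) {m : ℕ} (y : ℝ → Fin m → ℂ) : ℝ :=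
  ∑ i, holderNorm a b l α fun t => y t i

def InHolderM (a b : ℝ) (l : ℕ) (α : ℝ) {m : ℕ} (A : ℝ → Matrix (Fin m) (Fin m) ℂ) : Prop :=
  ∀ i j, InHolder a b l α fun t => A t i j

noncomputable def holderNormM (a b : ℝ) (l : ℕ) (α : ℝ) {m : ℕ}
    (A : ℝ → Matrix (Fin m) (Fin m) ℂ) : ℝ :=
  ∑ i, ∑ j, holderNorm a b l α fun t => A t i j

noncomputable def Lop (a b : ℝ) {m : ℕ} (A : ℝ → Matrix (Fin m) (Fin m) ℂ)
    (y : ℝ → Fin m → ℂ) : ℝ → Fin m → ℂ :=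
  fun t i => derivWithin (fun s => y s i) (Set.Icc a b) t + (A t).mulVec (y t) i

def SolvesV (a b : ℝ) {m : ℕ} (A : ℝ → Matrix (Fin m) (Fin m) ℂ)
    (y f : ℝ → Fin m → ℂ) : Prop :=
  ∀ t ∈ Set.Icc a b, ∀ i, Lop a b A y t i = f t i

/-- Unique solvability of the problem `y' + Ay = f`, `By = q` in `(C^{n+1,α})^m` for all data
`f ∈ (C^{n,α})^m`, `q ∈ ℂ^m` (i.e. invertibility of the operator `(L,B)`). -/
def UniqSolv (a b : ℝ) (n : ℕ) (α : ℝ) {m : ℕ} (A : ℝ → Matrix (Fin m) (Fin m) ℂ)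
    (B : (ℝ → Fin m → ℂ) →ₗ[ℂ] (Fin m → ℂ)) : Prop :=
  ∀ f : ℝ → Fin m → ℂ, ∀ q : Fin m → ℂ, InHolderV a b n α f →
    ∃ y : ℝ → Fin m → ℂ, InHolderV a b (n + 1) α y ∧ SolvesV a b A y f ∧ B y = q ∧
      ∀ y' : ℝ → Fin m → ℂ, InHolderV a b (n + 1) α y' → SolvesV a b A y' f → B y' = q →
        Set.EqOn y' y (Set.Icc a b)

/-- Condition (0): the homogeneous limiting problem has only the trivial solution. -/
def CondZero (a b : ℝ) (n : ℕ) (α : ℝ) {m : ℕ} (A : ℝ → Matrix (Fin m) (Fin m) ℂ)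
    (B : (ℝ → Fin m → ℂ) →ₗ[ℂ] (Fin m → ℂ)) : Prop :=
  ∀ y : ℝ → Fin m → ℂ, InHolderV a b (n + 1) α y → SolvesV a b A y 0 → B y = 0 →
    Set.EqOn y 0 (Set.Icc a b)

/-- Limit Condition (I): `A(·,ε) → A(·,0)` in `(C^{n,α})^{m×m}` as `ε → 0+`. -/
def CondI (a b : ℝ) (n : ℕ) (α : ℝ) {m : ℕ} (A : ℝ → ℝ → Matrix (Fin m) (Fin m) ℂ) : Prop :=
  Filter.Tendsto (fun ε => holderNormM a b n α (fun t => A ε t - A 0 t))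
    (nhdsWithin 0 (Set.Ioi 0)) (nhds 0)

/-- Limit Condition (II): `B(ε)y → B(0)y` in `ℂ^m` for every `y ∈ (C^{n+1,α})^m`. -/
def CondII (a b : ℝ) (n : ℕ) (α : ℝ) {m : ℕ}
    (B : ℝ → (ℝ → Fin m → ℂ) →ₗ[ℂ] (Fin m → ℂ)) : Prop :=
  ∀ y : ℝ → Fin m → ℂ, InHolderV a b (n + 1) α y →
    Filter.Tendsto (fun ε => B ε y) (nhdsWithin 0 (Set.Ioi 0)) (nhds (B 0 y))

/-- Limit Condition (III): `f(·,ε) → f(·,0)` in `(C^{n,α})^m` as `ε → 0+`. -/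
def CondIII (a b : ℝ) (n : ℕ) (α : ℝ) {m : ℕ} (f : ℝ → ℝ → Fin m → ℂ) : Prop :=
  Filter.Tendsto (fun ε => holderNormV a b n α (fun t => f ε t - f 0 t))
    (nhdsWithin 0 (Set.Ioi 0)) (nhds 0)

/-- Limit Condition (IV): `q(ε) → q(0)` in `ℂ^m` as `ε → 0+`. -/
def CondIV {m : ℕ} (q : ℝ → Fin m → ℂ) : Prop :=
  Filter.Tendsto q (nhdsWithin 0 (Set.Ioi 0)) (nhds (q 0))

/-- Basic Definition: the solution to the family of boundary-value problems
`L(ε)y = f(·,ε)`, `B(ε)y = q(ε)` is continuous in the parameter `ε` at `ε = 0`: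
(∗) for some `0 < ε₁ < ε₀` the problem is uniquely solvable for all `ε ∈ [0,ε₁)` and all data,
and (∗∗) Limit Conditions (III) and (IV) imply `y(·,ε) → y(·,0)` in `(C^{n+1,α})^m`. -/
def SolContinuousInParam (a b : ℝ) (n : ℕ) (α ε₀ : ℝ) {m : ℕ}
    (A : ℝ → ℝ → Matrix (Fin m) (Fin m) ℂ)
    (B : ℝ → (ℝ → Fin m → ℂ) →ₗ[ℂ] (Fin m → ℂ)) : Prop :=
  ∃ ε₁ : ℝ, 0 < ε₁ ∧ ε₁ < ε₀ ∧
    (∀ ε ∈ Set.Ico (0:ℝ) ε₁, UniqSolv a b n α (A ε) (B ε)) ∧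
    (∀ (f : ℝ → ℝ → Fin m → ℂ) (q : ℝ → Fin m → ℂ) (y : ℝ → ℝ → Fin m → ℂ),
      (∀ ε ∈ Set.Ico (0:ℝ) ε₁, InHolderV a b n α (f ε) ∧ InHolderV a b (n + 1) α (y ε) ∧
        SolvesV a b (A ε) (y ε) (f ε) ∧ B ε (y ε) = q ε) →
      CondIII a b n α f → CondIV q →
      Filter.Tendsto (fun ε => holderNormV a b (n + 1) α (fun t => y ε t - y 0 t))
        (nhdsWithin 0 (Set.Ioi 0)) (nhds 0))

/-!
Both limit conditions are read off from particular families to which the Basic Definition applies.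

(I) Let `Y_j(ε)` solve `L(ε)y = A(·,0)e_j`, `B(ε)y = B(0)e_j`. At `ε = 0` this problem is solved
by the constant `e_j`, so `Y_j(ε) → e_j` in `C^{n+1,α}`. Since
`L(ε)(Y_j(ε) - e_j) = -(A(·,ε) - A(·,0))e_j` and `C^{n,α}` is a Banach algebra up to a constant,
`X(ε) = ‖A(·,ε) - A(·,0)‖` satisfies `X ≤ (1 + C (X + ‖A(·,0)‖)) R(ε)` with `R(ε) → 0`, and the
term `C R X` can be absorbed.

(II) Fix `y`, put `c(ε) = B(0)y - B(ε)y` and let `Z_i(ε)` solve `L(ε)z = 0`, `B(ε)z = e_i`. Then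
`y + ∑ c_i(ε) Z_i(ε)` solves the problem with data `L(ε)y → L(0)y` (by (I)) and `B(0)y`, so
`D(ε) = ∑ c_i(ε) Z_i(ε) → 0`. As `B(0)` is bounded and `B(0)Z_i(ε) → B(0)Z_i(0) = e_i`, we get
`‖c‖ ≤ K ‖D‖ + ‖c‖ · o(1)`, hence `c(ε) → 0`.
-/

section HolderNorm

variable {a b α : ℝ} {l : ℕ} {f g : ℝ → ℂ}

lemma supIcc_nonneg (g : ℝ → ℂ) : 0 ≤ supIcc a b g :=
  Real.sSup_nonneg (by rintro r ⟨t, -, rfl⟩; exact norm_nonneg _)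

lemma supIcc_le {M : ℝ} (hM : 0 ≤ M) (h : ∀ t ∈ Icc a b, ‖g t‖ ≤ M) : supIcc a b g ≤ M :=
  Real.sSup_le (by rintro r ⟨t, ht, rfl⟩; exact h t ht) hM

lemma norm_le_supIcc (hg : ContinuousOn g (Icc a b)) {t : ℝ} (ht : t ∈ Icc a b) :
    ‖g t‖ ≤ supIcc a b g :=
  le_csSup (isCompact_Icc.image_of_continuousOn hg.norm).bddAbove ⟨t, ht, rfl⟩

lemma holderSemi_nonneg (g : ℝ → ℂ) : 0 ≤ holderSemi a b α g :=
  Real.sSup_nonneg (by rintro r ⟨s, -, t, -, -, rfl⟩; positivity)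

lemma rpow_abs_sub_pos {s t : ℝ} (hst : s ≠ t) : 0 < |s - t| ^ α :=
  Real.rpow_pos_of_pos (abs_pos.2 (sub_ne_zero.2 hst)) α

lemma holderSemi_le {K : ℝ} (hK : 0 ≤ K)
    (h : ∀ s ∈ Icc a b, ∀ t ∈ Icc a b, ‖g s - g t‖ ≤ K * |s - t| ^ α) :
    holderSemi a b α g ≤ K := by
  refine Real.sSup_le ?_ hK
  rintro r ⟨s, hs, t, ht, hst, rfl⟩
  rw [div_le_iff₀ (rpow_abs_sub_pos hst)]
  exact h s hs t ht

lemma norm_sub_le_holderSemi_mul {K : ℝ}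
    (h : ∀ s ∈ Icc a b, ∀ t ∈ Icc a b, ‖g s - g t‖ ≤ K * |s - t| ^ α)
    {s t : ℝ} (hs : s ∈ Icc a b) (ht : t ∈ Icc a b) :
    ‖g s - g t‖ ≤ holderSemi a b α g * |s - t| ^ α := by
  rcases eq_or_ne s t with rfl | hst
  · simpa using mul_nonneg (holderSemi_nonneg g) (Real.rpow_nonneg (abs_nonneg (s - s)) α)
  rw [← div_le_iff₀ (rpow_abs_sub_pos hst)]
  refine le_csSup ⟨max K 0, ?_⟩ ⟨s, hs, t, ht, hst, rfl⟩
  rintro r ⟨s, hs, t, ht, hst, rfl⟩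
  rw [div_le_iff₀ (rpow_abs_sub_pos hst)]
  exact (h s hs t ht).trans (by gcongr; exact le_max_left K 0)

lemma cNorm_nonneg (f : ℝ → ℂ) : 0 ≤ cNorm a b l f :=
  Finset.sum_nonneg fun _ _ => supIcc_nonneg _

lemma cNorm_le_holderNorm (f : ℝ → ℂ) : cNorm a b l f ≤ holderNorm a b l α f := by
  unfold holderNorm
  split_ifs
  · simp
  · linarith [holderSemi_nonneg (a := a) (b := b) (α := α) (iteratedDerivWithin l f (Icc a b))]

lemma holderNorm_nonneg (f : ℝ → ℂ) : 0 ≤ holderNorm a b l α f :=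
  (cNorm_nonneg f).trans (cNorm_le_holderNorm f)

lemma holderSemi_le_holderNorm (hα : α ≠ 0) (f : ℝ → ℂ) :
    holderSemi a b α (iteratedDerivWithin l f (Icc a b)) ≤ holderNorm a b l α f := by
  rw [holderNorm, if_neg hα]
  linarith [cNorm_nonneg (a := a) (b := b) (l := l) f]

lemma holderNorm_congr (h : EqOn f g (Icc a b)) : holderNorm a b l α f = holderNorm a b l α g := by
  have hD : ∀ j, EqOn (iteratedDerivWithin j f (Icc a b)) (iteratedDerivWithin j g (Icc a b))
      (Icc a b) := fun j => iteratedDerivWithin_congr h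
  have hsup : ∀ j, supIcc a b (iteratedDerivWithin j f (Icc a b))
      = supIcc a b (iteratedDerivWithin j g (Icc a b)) := fun j => by
    rw [supIcc, supIcc, image_congr fun t ht => by rw [hD j ht]]
  have hsemi : holderSemi a b α (iteratedDerivWithin l f (Icc a b))
      = holderSemi a b α (iteratedDerivWithin l g (Icc a b)) := by
    unfold holderSemi
    congr 1
    ext r
    constructor <;> rintro ⟨s, hs, t, ht, hst, rfl⟩ <;>
      exact ⟨s, hs, t, ht, hst, by rw [hD l hs, hD l ht]⟩
  simp only [holderNorm, cNorm, hsup, hsemi]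

lemma holderNorm_le_of_bounds (B : ℕ → ℝ) (hB0 : ∀ j, 0 ≤ B j)
    (hB : ∀ j ≤ l, ∀ t ∈ Icc a b, ‖iteratedDerivWithin j f (Icc a b) t‖ ≤ B j)
    {K : ℝ} (hK : 0 ≤ K) (hK' : α ≠ 0 → ∀ s ∈ Icc a b, ∀ t ∈ Icc a b,
      ‖iteratedDerivWithin l f (Icc a b) s - iteratedDerivWithin l f (Icc a b) t‖
        ≤ K * |s - t| ^ α) :
    holderNorm a b l α f ≤ ∑ j ∈ Finset.range (l + 1), B j + if α = 0 then 0 else K := by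
  refine add_le_add (Finset.sum_le_sum fun j hj => supIcc_le (hB0 j) ?_) ?_
  · exact hB j (Finset.mem_range_succ_iff.1 hj)
  · split_ifs with hα
    · rfl
    · exact holderSemi_le hK (hK' hα)

lemma norm_iteratedDerivWithin_le_cNorm (hab : a < b) (hf : ContDiffOn ℝ l f (Icc a b))
    {j : ℕ} (hj : j ≤ l) {t : ℝ} (ht : t ∈ Icc a b) :
    ‖iteratedDerivWithin j f (Icc a b) t‖ ≤ cNorm a b l f :=
  (norm_le_supIcc (hf.continuousOn_iteratedDerivWithin (by exact_mod_cast hj)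
    (uniqueDiffOn_Icc hab)) ht).trans
    (Finset.single_le_sum (f := fun j => supIcc a b (iteratedDerivWithin j f (Icc a b)))
      (fun _ _ => supIcc_nonneg _) (Finset.mem_range_succ_iff.2 hj))

lemma InHolder.norm_le_holderNorm (hab : a < b) (hf : InHolder a b l α f) {t : ℝ}
    (ht : t ∈ Icc a b) : ‖f t‖ ≤ holderNorm a b l α f := by
  simpa using (norm_iteratedDerivWithin_le_cNorm hab hf.1 (Nat.zero_le l) ht).trans
    (cNorm_le_holderNorm f)

lemma InHolder.norm_sub_iteratedDerivWithin_le (hf : InHolder a b l α f) (hα : α ≠ 0)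
    {s t : ℝ} (hs : s ∈ Icc a b) (ht : t ∈ Icc a b) :
    ‖iteratedDerivWithin l f (Icc a b) s - iteratedDerivWithin l f (Icc a b) t‖
      ≤ holderSemi a b α (iteratedDerivWithin l f (Icc a b)) * |s - t| ^ α := by
  obtain ⟨K, hK⟩ := hf.2.resolve_left hα
  exact norm_sub_le_holderSemi_mul hK hs ht

lemma InHolder.norm_sub_iteratedDerivWithin_le_two_mul (hab : a < b) (hf : InHolder a b l α f)
    {s t : ℝ} (hs : s ∈ Icc a b) (ht : t ∈ Icc a b) :
    ‖iteratedDerivWithin l f (Icc a b) s - iteratedDerivWithin l f (Icc a b) t‖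
      ≤ 2 * holderNorm a b l α f * |s - t| ^ α := by
  have hN := holderNorm_nonneg (a := a) (b := b) (l := l) (α := α) f
  by_cases hα : α = 0
  · subst hα
    have hs' := norm_iteratedDerivWithin_le_cNorm hab hf.1 le_rfl hs
    have ht' := norm_iteratedDerivWithin_le_cNorm hab hf.1 le_rfl ht
    have := cNorm_le_holderNorm (a := a) (b := b) (l := l) (α := 0) f
    rw [Real.rpow_zero, mul_one]
    linarith [norm_sub_le (iteratedDerivWithin l f (Icc a b) s)
      (iteratedDerivWithin l f (Icc a b) t)]
  · calc _ ≤ holderSemi a b α (iteratedDerivWithin l f (Icc a b)) * |s - t| ^ α :=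
          hf.norm_sub_iteratedDerivWithin_le hα hs ht
      _ ≤ 2 * holderNorm a b l α f * |s - t| ^ α := by
          gcongr
          linarith [holderSemi_le_holderNorm (a := a) (b := b) (l := l) hα f]

lemma inHolder_const (c : ℂ) : InHolder a b l α (fun _ => c) :=
  ⟨contDiffOn_const, Or.inr ⟨0, fun s _ t _ => by simp [iteratedDerivWithin_const]⟩⟩

lemma holderNorm_zero : holderNorm a b l α (fun _ => (0 : ℂ)) = 0 := by
  refine le_antisymm ?_ (holderNorm_nonneg _)
  simpa using holderNorm_le_of_bounds (a := a) (b := b) (l := l) (α := α)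
    (f := fun _ => (0 : ℂ)) (fun _ => 0) (fun _ => le_rfl) (by simp) le_rfl (by simp)

lemma iteratedDerivWithin_Icc_add (hab : a < b) (hf : ContDiffOn ℝ l f (Icc a b))
    (hg : ContDiffOn ℝ l g (Icc a b)) {j : ℕ} (hj : j ≤ l) {t : ℝ} (ht : t ∈ Icc a b) :
    iteratedDerivWithin j (fun t => f t + g t) (Icc a b) t
      = iteratedDerivWithin j f (Icc a b) t + iteratedDerivWithin j g (Icc a b) t :=
  iteratedDerivWithin_fun_add ht (uniqueDiffOn_Icc hab)
    (hf.of_le (by exact_mod_cast hj) t ht) (hg.of_le (by exact_mod_cast hj) t ht)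

lemma InHolder.add (hab : a < b) (hf : InHolder a b l α f) (hg : InHolder a b l α g) :
    InHolder a b l α (fun t => f t + g t) := by
  refine ⟨hf.1.add hg.1, ?_⟩
  by_cases hα : α = 0
  · exact Or.inl hα
  obtain ⟨K, hK⟩ := hf.2.resolve_left hα
  obtain ⟨L, hL⟩ := hg.2.resolve_left hα
  refine Or.inr ⟨K + L, fun s hs t ht => ?_⟩
  rw [iteratedDerivWithin_Icc_add hab hf.1 hg.1 le_rfl hs,
    iteratedDerivWithin_Icc_add hab hf.1 hg.1 le_rfl ht, add_sub_add_comm, add_mul]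
  exact (norm_add_le _ _).trans (add_le_add (hK s hs t ht) (hL s hs t ht))

lemma holderNorm_add_le (hab : a < b) (hf : InHolder a b l α f) (hg : InHolder a b l α g) :
    holderNorm a b l α (fun t => f t + g t) ≤ holderNorm a b l α f + holderNorm a b l α g := by
  have hsup : ∀ {h : ℝ → ℂ}, InHolder a b l α h → ∀ j ≤ l, ∀ t ∈ Icc a b,
      ‖iteratedDerivWithin j h (Icc a b) t‖ ≤ supIcc a b (iteratedDerivWithin j h (Icc a b)) :=
    fun hh j hj t ht => norm_le_supIcc (hh.1.continuousOn_iteratedDerivWithin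
      (by exact_mod_cast hj) (uniqueDiffOn_Icc hab)) ht
  refine (holderNorm_le_of_bounds (fun j => supIcc a b (iteratedDerivWithin j f (Icc a b))
      + supIcc a b (iteratedDerivWithin j g (Icc a b)))
    (fun j => add_nonneg (supIcc_nonneg _) (supIcc_nonneg _))
    (fun j hj t ht => ?_)
    (K := holderSemi a b α (iteratedDerivWithin l f (Icc a b))
      + holderSemi a b α (iteratedDerivWithin l g (Icc a b)))
    (add_nonneg (holderSemi_nonneg _) (holderSemi_nonneg _))
    (fun hα s hs t ht => ?_)).trans_eq ?_
  · rw [iteratedDerivWithin_Icc_add hab hf.1 hg.1 hj ht]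
    exact (norm_add_le _ _).trans (add_le_add (hsup hf j hj t ht) (hsup hg j hj t ht))
  · rw [iteratedDerivWithin_Icc_add hab hf.1 hg.1 le_rfl hs,
      iteratedDerivWithin_Icc_add hab hf.1 hg.1 le_rfl ht, add_sub_add_comm, add_mul]
    exact (norm_add_le _ _).trans (add_le_add (hf.norm_sub_iteratedDerivWithin_le hα hs ht)
      (hg.norm_sub_iteratedDerivWithin_le hα hs ht))
  · simp only [holderNorm, cNorm, Finset.sum_add_distrib]
    split_ifs <;> ring

lemma InHolder.const_mul (c : ℂ) (hf : InHolder a b l α f) :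
    InHolder a b l α (fun t => c * f t) := by
  refine ⟨contDiffOn_const.mul hf.1, hf.2.imp_right fun ⟨K, hK⟩ => ⟨‖c‖ * K, fun s hs t ht => ?_⟩⟩
  simp only [iteratedDerivWithin_const_mul_field]
  rw [← mul_sub, norm_mul, mul_assoc]
  exact mul_le_mul_of_nonneg_left (hK s hs t ht) (norm_nonneg c)

lemma InHolder.neg (hf : InHolder a b l α f) : InHolder a b l α (fun t => -f t) := by
  simpa using hf.const_mul (-1)

lemma InHolder.sub (hab : a < b) (hf : InHolder a b l α f) (hg : InHolder a b l α g) :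
    InHolder a b l α (fun t => f t - g t) := by
  simpa [sub_eq_add_neg] using hf.add hab hg.neg

lemma holderNorm_neg (f : ℝ → ℂ) : holderNorm a b l α (fun t => -f t) = holderNorm a b l α f := by
  simp only [holderNorm, cNorm, supIcc, holderSemi, iteratedDerivWithin_fun_neg, norm_neg,
    neg_sub_neg, norm_sub_rev]

lemma InHolder.sum (hab : a < b) {ι : Type*} (s : Finset ι) {F : ι → ℝ → ℂ}
    (hF : ∀ i ∈ s, InHolder a b l α (F i)) : InHolder a b l α (fun t => ∑ i ∈ s, F i t) := by
  classical
  induction s using Finset.induction_on with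
  | empty => simpa using inHolder_const 0
  | insert i s hi ih =>
    simp only [Finset.sum_insert hi]
    rw [Finset.forall_mem_insert] at hF
    exact hF.1.add hab (ih hF.2)

lemma holderNorm_sum_le (hab : a < b) {ι : Type*} (s : Finset ι) {F : ι → ℝ → ℂ}
    (hF : ∀ i ∈ s, InHolder a b l α (F i)) :
    holderNorm a b l α (fun t => ∑ i ∈ s, F i t) ≤ ∑ i ∈ s, holderNorm a b l α (F i) := by
  classical
  induction s using Finset.induction_on with
  | empty => simp [holderNorm_zero]
  | insert i s hi ih =>
    simp only [Finset.sum_insert hi]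
    rw [Finset.forall_mem_insert] at hF
    exact (holderNorm_add_le hab hF.1 (InHolder.sum hab s hF.2)).trans
      (add_le_add_right (ih hF.2) _)

noncomputable def lengthConst (a b : ℝ) : ℝ := max 1 (b - a)

lemma one_le_lengthConst : 1 ≤ lengthConst a b := le_max_left _ _

lemma abs_sub_le_lengthConst_mul_rpow (hα0 : 0 ≤ α) (hα1 : α ≤ 1) {s t : ℝ}
    (hs : s ∈ Icc a b) (ht : t ∈ Icc a b) : |s - t| ≤ lengthConst a b * |s - t| ^ α := by
  rcases le_or_gt |s - t| 1 with h | h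
  · calc |s - t| = |s - t| ^ (1 : ℝ) := (Real.rpow_one _).symm
      _ ≤ |s - t| ^ α := Real.rpow_le_rpow_of_exponent_ge' (abs_nonneg _) h hα0 hα1
      _ ≤ _ := le_mul_of_one_le_left (Real.rpow_nonneg (abs_nonneg _) α) one_le_lengthConst
  · calc |s - t| ≤ b - a := abs_sub_le_iff.2 ⟨by linarith [hs.2, ht.1], by linarith [hs.1, ht.2]⟩
      _ ≤ lengthConst a b := le_max_right _ _
      _ ≤ _ := le_mul_of_one_le_right (zero_le_one.trans one_le_lengthConst)
          (Real.one_le_rpow h.le hα0)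

lemma norm_sub_iteratedDerivWithin_le_of_succ (hab : a < b) (hα0 : 0 ≤ α) (hα1 : α ≤ 1)
    (hf : ContDiffOn ℝ (l + 1 : ℕ) f (Icc a b)) {s t : ℝ} (hs : s ∈ Icc a b) (ht : t ∈ Icc a b) :
    ‖iteratedDerivWithin l f (Icc a b) s - iteratedDerivWithin l f (Icc a b) t‖
      ≤ lengthConst a b * cNorm a b (l + 1) f * |s - t| ^ α := by
  have hmvt := (convex_Icc a b).norm_image_sub_le_of_norm_derivWithin_le
    (hf.differentiableOn_iteratedDerivWithin (by exact_mod_cast Nat.lt_succ_self l)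
      (uniqueDiffOn_Icc hab))
    (fun x hx => by
      rw [← iteratedDerivWithin_succ]
      exact norm_iteratedDerivWithin_le_cNorm hab hf le_rfl hx) ht hs
  rw [Real.norm_eq_abs] at hmvt
  calc _ ≤ cNorm a b (l + 1) f * |s - t| := hmvt
    _ ≤ cNorm a b (l + 1) f * (lengthConst a b * |s - t| ^ α) :=
        mul_le_mul_of_nonneg_left (abs_sub_le_lengthConst_mul_rpow hα0 hα1 hs ht) (cNorm_nonneg f)
    _ = _ := by ring

lemma InHolder.of_succ (hab : a < b) (hα0 : 0 ≤ α) (hα1 : α ≤ 1)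
    (hf : InHolder a b (l + 1) α f) : InHolder a b l α f :=
  ⟨hf.1.of_le (by exact_mod_cast Nat.le_succ l), Or.inr ⟨_, fun _ hs _ ht =>
    norm_sub_iteratedDerivWithin_le_of_succ hab hα0 hα1 hf.1 hs ht⟩⟩

lemma holderNorm_le_of_succ (hab : a < b) (hα0 : 0 ≤ α) (hα1 : α ≤ 1)
    (hf : InHolder a b (l + 1) α f) :
    holderNorm a b l α f ≤ (1 + lengthConst a b) * holderNorm a b (l + 1) α f := by
  have hC := cNorm_nonneg (a := a) (b := b) (l := l + 1) f
  have hL := one_le_lengthConst (a := a) (b := b)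
  have hmono : cNorm a b l f ≤ cNorm a b (l + 1) f :=
    Finset.sum_le_sum_of_subset_of_nonneg (Finset.range_subset_range.2 (Nat.le_succ _))
      (fun _ _ _ => supIcc_nonneg _)
  have hN := cNorm_le_holderNorm (a := a) (b := b) (l := l + 1) (α := α) f
  refine (holderNorm_le_of_bounds (fun j => supIcc a b (iteratedDerivWithin j f (Icc a b)))
    (fun j => supIcc_nonneg _) (fun j hj t ht => norm_le_supIcc
      (hf.1.continuousOn_iteratedDerivWithin (by exact_mod_cast hj.trans (Nat.le_succ l))
        (uniqueDiffOn_Icc hab)) ht)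
    (mul_nonneg (zero_le_one.trans hL) hC)
    (fun _ s hs t ht => norm_sub_iteratedDerivWithin_le_of_succ hab hα0 hα1 hf.1 hs ht)).trans ?_
  change cNorm a b l f + _ ≤ _
  split_ifs <;> nlinarith

lemma holderNorm_succ (f : ℝ → ℂ) :
    holderNorm a b (l + 1) α f
      = supIcc a b f + holderNorm a b l α (derivWithin f (Icc a b)) := by
  have hD : ∀ j, iteratedDerivWithin (j + 1) f (Icc a b)
      = iteratedDerivWithin j (derivWithin f (Icc a b)) (Icc a b) :=
    fun j => iteratedDerivWithin_succ'
  simp only [holderNorm, cNorm, Finset.sum_range_succ', hD, iteratedDerivWithin_zero]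
  ring

lemma InHolder.derivWithin (hab : a < b) (hf : InHolder a b (l + 1) α f) :
    InHolder a b l α (derivWithin f (Icc a b)) := by
  refine ⟨hf.1.derivWithin (uniqueDiffOn_Icc hab) (by exact_mod_cast le_rfl), ?_⟩
  simpa only [← iteratedDerivWithin_succ'] using hf.2

lemma holderNorm_derivWithin_le (f : ℝ → ℂ) :
    holderNorm a b l α (derivWithin f (Icc a b)) ≤ holderNorm a b (l + 1) α f := by
  rw [holderNorm_succ]
  linarith [supIcc_nonneg (a := a) (b := b) f]

end HolderNorm

section HolderMul

variable {a b α : ℝ}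

noncomputable def holderMulConst (a b : ℝ) : ℕ → ℝ
  | 0 => 5
  | l + 1 => 1 + 2 * (1 + lengthConst a b) * holderMulConst a b l

lemma holderMulConst_nonneg (l : ℕ) : 0 ≤ holderMulConst a b l := by
  have hL : 0 ≤ lengthConst a b := zero_le_one.trans one_le_lengthConst
  induction l with
  | zero => norm_num [holderMulConst]
  | succ l ih => rw [holderMulConst]; positivity

lemma inHolder_mul_and_holderNorm_mul_le (hab : a < b) (hα0 : 0 ≤ α) (hα1 : α ≤ 1) (l : ℕ) :
    ∀ f g : ℝ → ℂ, InHolder a b l α f → InHolder a b l α g →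
      InHolder a b l α (fun t => f t * g t) ∧ holderNorm a b l α (fun t => f t * g t)
        ≤ holderMulConst a b l * holderNorm a b l α f * holderNorm a b l α g := by
  induction l with
  | zero =>
    intro f g hf hg
    set Nf := holderNorm a b 0 α f
    set Ng := holderNorm a b 0 α g
    have hNf : 0 ≤ Nf := holderNorm_nonneg f
    have hNg : 0 ≤ Ng := holderNorm_nonneg g
    have hsup : ∀ t ∈ Icc a b, ‖f t * g t‖ ≤ Nf * Ng := fun t ht => by
      rw [norm_mul]
      exact mul_le_mul (hf.norm_le_holderNorm hab ht) (hg.norm_le_holderNorm hab ht)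
        (norm_nonneg _) hNf
    have hratio : ∀ s ∈ Icc a b, ∀ t ∈ Icc a b,
        ‖f s * g s - f t * g t‖ ≤ 4 * Nf * Ng * |s - t| ^ α := fun s hs t ht => by
      have hf' := hf.norm_sub_iteratedDerivWithin_le_two_mul hab hs ht
      have hg' := hg.norm_sub_iteratedDerivWithin_le_two_mul hab hs ht
      simp only [iteratedDerivWithin_zero] at hf' hg'
      calc ‖f s * g s - f t * g t‖ = ‖(f s - f t) * g s + f t * (g s - g t)‖ := by ring_nf
        _ ≤ ‖f s - f t‖ * ‖g s‖ + ‖f t‖ * ‖g s - g t‖ := by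
          rw [← norm_mul, ← norm_mul]; exact norm_add_le _ _
        _ ≤ 2 * Nf * |s - t| ^ α * Ng + Nf * (2 * Ng * |s - t| ^ α) := by
          gcongr
          exacts [hg.norm_le_holderNorm hab hs, hf.norm_le_holderNorm hab ht]
        _ = 4 * Nf * Ng * |s - t| ^ α := by ring
    refine ⟨⟨hf.1.mul hg.1, Or.inr ⟨_, by simpa only [iteratedDerivWithin_zero] using hratio⟩⟩, ?_⟩
    refine (holderNorm_le_of_bounds (fun _ => Nf * Ng) (fun _ => mul_nonneg hNf hNg)
      (fun j hj t ht => by simpa [Nat.le_zero.1 hj] using hsup t ht)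
      (by positivity : 0 ≤ 4 * Nf * Ng)
      (fun _ => by simpa only [iteratedDerivWithin_zero] using hratio)).trans ?_
    simp only [zero_add, Finset.sum_range_one, holderMulConst]
    split_ifs <;> nlinarith [mul_nonneg hNf hNg]
  | succ l ih =>
    intro f g hf hg
    have hL : 0 ≤ lengthConst a b := zero_le_one.trans one_le_lengthConst
    set f' := derivWithin f (Icc a b)
    set g' := derivWithin g (Icc a b)
    set q : ℝ → ℂ := fun t => f' t * g t + f t * g' t
    have h1 := ih f' g (hf.derivWithin hab) (hg.of_succ hab hα0 hα1)
    have h2 := ih f g' (hf.of_succ hab hα0 hα1) (hg.derivWithin hab)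
    have hq : InHolder a b l α q := h1.1.add hab h2.1
    have hderiv : EqOn (derivWithin (fun t => f t * g t) (Icc a b)) q (Icc a b) :=
      fun t ht => derivWithin_fun_mul (hf.1.differentiableOn (by simp) t ht)
        (hg.1.differentiableOn (by simp) t ht)
    have hD : ∀ t ∈ Icc a b, iteratedDerivWithin (l + 1) (fun t => f t * g t) (Icc a b) t
        = iteratedDerivWithin l q (Icc a b) t := fun t ht => by
      rw [iteratedDerivWithin_succ']
      exact iteratedDerivWithin_congr hderiv ht
    refine ⟨⟨hf.1.mul hg.1, hq.2.imp_right fun ⟨K, hK⟩ => ⟨K, fun s hs t ht => by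
      rw [hD s hs, hD t ht]; exact hK s hs t ht⟩⟩, ?_⟩
    set Nf := holderNorm a b (l + 1) α f
    set Ng := holderNorm a b (l + 1) α g
    have hNf : 0 ≤ Nf := holderNorm_nonneg f
    have hNg : 0 ≤ Ng := holderNorm_nonneg g
    have hsup : supIcc a b (fun t => f t * g t) ≤ Nf * Ng := supIcc_le (mul_nonneg hNf hNg)
      fun t ht => by
        rw [norm_mul]
        exact mul_le_mul (hf.norm_le_holderNorm hab ht) (hg.norm_le_holderNorm hab ht)
          (norm_nonneg _) hNf
    have hf'N : holderNorm a b l α f' ≤ Nf := holderNorm_derivWithin_le f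
    have hg'N : holderNorm a b l α g' ≤ Ng := holderNorm_derivWithin_le g
    have hfN := holderNorm_le_of_succ hab hα0 hα1 hf
    have hgN := holderNorm_le_of_succ hab hα0 hα1 hg
    have hC := holderMulConst_nonneg (a := a) (b := b) l
    rw [holderNorm_succ, holderNorm_congr hderiv]
    calc supIcc a b (fun t => f t * g t) + holderNorm a b l α q
        ≤ Nf * Ng + (holderMulConst a b l * holderNorm a b l α f' * holderNorm a b l α g
          + holderMulConst a b l * holderNorm a b l α f * holderNorm a b l α g') :=
          add_le_add hsup ((holderNorm_add_le hab h1.1 h2.1).trans (add_le_add h1.2 h2.2))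
      _ ≤ Nf * Ng + (holderMulConst a b l * Nf * ((1 + lengthConst a b) * Ng)
          + holderMulConst a b l * ((1 + lengthConst a b) * Nf) * Ng) := by
          gcongr
          exacts [holderNorm_nonneg _, holderNorm_nonneg _]
      _ = holderMulConst a b (l + 1) * Nf * Ng := by rw [holderMulConst]; ring

lemma InHolder.mul (hab : a < b) (hα0 : 0 ≤ α) (hα1 : α ≤ 1) {l : ℕ} {f g : ℝ → ℂ}
    (hf : InHolder a b l α f) (hg : InHolder a b l α g) : InHolder a b l α (fun t => f t * g t) :=
  (inHolder_mul_and_holderNorm_mul_le hab hα0 hα1 l f g hf hg).1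

lemma holderNorm_mul_le (hab : a < b) (hα0 : 0 ≤ α) (hα1 : α ≤ 1) {l : ℕ} {f g : ℝ → ℂ}
    (hf : InHolder a b l α f) (hg : InHolder a b l α g) :
    holderNorm a b l α (fun t => f t * g t)
      ≤ holderMulConst a b l * holderNorm a b l α f * holderNorm a b l α g :=
  (inHolder_mul_and_holderNorm_mul_le hab hα0 hα1 l f g hf hg).2

end HolderMul

section HolderVector

variable {a b α : ℝ} {l m : ℕ} {y z : ℝ → Fin m → ℂ} {A A' : ℝ → Matrix (Fin m) (Fin m) ℂ}

lemma holderNormV_nonneg (y : ℝ → Fin m → ℂ) : 0 ≤ holderNormV a b l α y :=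
  Finset.sum_nonneg fun _ _ => holderNorm_nonneg _

lemma holderNormM_nonneg (A : ℝ → Matrix (Fin m) (Fin m) ℂ) : 0 ≤ holderNormM a b l α A :=
  Finset.sum_nonneg fun _ _ => Finset.sum_nonneg fun _ _ => holderNorm_nonneg _

lemma holderNormV_congr (h : EqOn y z (Icc a b)) : holderNormV a b l α y = holderNormV a b l α z :=
  Finset.sum_congr rfl fun i _ => holderNorm_congr fun _ ht => congrFun (h ht) i

lemma holderNormV_neg (y : ℝ → Fin m → ℂ) :
    holderNormV a b l α (fun t => -y t) = holderNormV a b l α y :=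
  Finset.sum_congr rfl fun _ _ => holderNorm_neg _

lemma InHolderV.add (hab : a < b) (hy : InHolderV a b l α y) (hz : InHolderV a b l α z) :
    InHolderV a b l α (fun t => y t + z t) :=
  fun i => (hy i).add hab (hz i)

lemma InHolderV.sub (hab : a < b) (hy : InHolderV a b l α y) (hz : InHolderV a b l α z) :
    InHolderV a b l α (fun t => y t - z t) :=
  fun i => (hy i).sub hab (hz i)

lemma inHolderV_const (c : Fin m → ℂ) : InHolderV a b l α (fun _ => c) :=
  fun i => inHolder_const (c i)

lemma InHolderV.sum_smul (hab : a < b) {ι : Type*} (s : Finset ι) (c : ι → ℂ)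
    {Z : ι → ℝ → Fin m → ℂ} (hZ : ∀ i ∈ s, InHolderV a b l α (Z i)) :
    InHolderV a b l α (∑ i ∈ s, c i • Z i) := fun k => by
  simpa [Finset.sum_apply] using
    InHolder.sum hab s (F := fun i t => c i * Z i t k) fun i hi => (hZ i hi k).const_mul (c i)

lemma InHolderV.of_succ (hab : a < b) (hα0 : 0 ≤ α) (hα1 : α ≤ 1)
    (hy : InHolderV a b (l + 1) α y) : InHolderV a b l α y :=
  fun i => (hy i).of_succ hab hα0 hα1

lemma holderNormV_le_of_succ (hab : a < b) (hα0 : 0 ≤ α) (hα1 : α ≤ 1)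
    (hy : InHolderV a b (l + 1) α y) :
    holderNormV a b l α y ≤ (1 + lengthConst a b) * holderNormV a b (l + 1) α y := by
  rw [holderNormV, holderNormV, Finset.mul_sum]
  exact Finset.sum_le_sum fun i _ => holderNorm_le_of_succ hab hα0 hα1 (hy i)

lemma InHolderM.sub (hab : a < b) (hA : InHolderM a b l α A) (hA' : InHolderM a b l α A') :
    InHolderM a b l α (fun t => A t - A' t) :=
  fun i j => (hA i j).sub hab (hA' i j)

lemma holderNormM_add_le (hab : a < b) (hA : InHolderM a b l α A) (hA' : InHolderM a b l α A') :
    holderNormM a b l α (fun t => A t + A' t) ≤ holderNormM a b l α A + holderNormM a b l α A' := by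
  simp only [holderNormM, ← Finset.sum_add_distrib]
  exact Finset.sum_le_sum fun i _ => Finset.sum_le_sum fun j _ =>
    holderNorm_add_le hab (hA i j) (hA' i j)

lemma InHolderV.mulVec (hab : a < b) (hα0 : 0 ≤ α) (hα1 : α ≤ 1) (hA : InHolderM a b l α A)
    (hy : InHolderV a b l α y) : InHolderV a b l α (fun t => (A t).mulVec (y t)) :=
  fun i => by
    simpa only [Matrix.mulVec, dotProduct] using
      InHolder.sum hab Finset.univ fun k _ => (hA i k).mul hab hα0 hα1 (hy k)

lemma holderNormV_mulVec_le (hab : a < b) (hα0 : 0 ≤ α) (hα1 : α ≤ 1)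
    (hA : InHolderM a b l α A) (hy : InHolderV a b l α y) :
    holderNormV a b l α (fun t => (A t).mulVec (y t))
      ≤ holderMulConst a b l * holderNormM a b l α A * holderNormV a b l α y := by
  have hyk : ∀ k, holderNorm a b l α (fun t => y t k) ≤ holderNormV a b l α y := fun k =>
    Finset.single_le_sum (f := fun k => holderNorm a b l α (fun t => y t k))
      (fun _ _ => holderNorm_nonneg _) (Finset.mem_univ k)
  have hC := holderMulConst_nonneg (a := a) (b := b) l
  calc holderNormV a b l α (fun t => (A t).mulVec (y t))
      ≤ ∑ i, ∑ k, holderMulConst a b l * holderNorm a b l α (fun t => A t i k)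
          * holderNorm a b l α (fun t => y t k) :=
        Finset.sum_le_sum fun i _ => (holderNorm_sum_le hab Finset.univ fun k _ =>
          (hA i k).mul hab hα0 hα1 (hy k)).trans
          (Finset.sum_le_sum fun k _ => holderNorm_mul_le hab hα0 hα1 (hA i k) (hy k))
    _ ≤ ∑ i, ∑ k, holderMulConst a b l * holderNorm a b l α (fun t => A t i k)
          * holderNormV a b l α y := by
        gcongr with i _ k _
        · exact mul_nonneg hC (holderNorm_nonneg _)
        · exact hyk k
    _ = holderMulConst a b l * holderNormM a b l α A * holderNormV a b l α y := by
        simp only [holderNormM, Finset.mul_sum, Finset.sum_mul]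

lemma inHolderV_Lop (hab : a < b) (hα0 : 0 ≤ α) (hα1 : α ≤ 1) (hA : InHolderM a b l α A)
    (hy : InHolderV a b (l + 1) α y) : InHolderV a b l α (Lop a b A y) :=
  fun i => ((hy i).derivWithin hab).add hab
    (InHolderV.mulVec hab hα0 hα1 hA (hy.of_succ hab hα0 hα1) i)

lemma holderNormV_Lop_le (hab : a < b) (hα0 : 0 ≤ α) (hα1 : α ≤ 1) (hA : InHolderM a b l α A)
    (hy : InHolderV a b (l + 1) α y) :
    holderNormV a b l α (Lop a b A y) ≤ (1 + holderMulConst a b l * (1 + lengthConst a b)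
      * holderNormM a b l α A) * holderNormV a b (l + 1) α y := by
  have hyl := hy.of_succ hab hα0 hα1
  have hAy := InHolderV.mulVec hab hα0 hα1 hA hyl
  have hderiv : ∑ i, holderNorm a b l α (derivWithin (fun t => y t i) (Icc a b))
      ≤ holderNormV a b (l + 1) α y :=
    Finset.sum_le_sum fun i _ => holderNorm_derivWithin_le _
  have hmul := holderNormV_mulVec_le hab hα0 hα1 hA hyl
  have hsucc := holderNormV_le_of_succ hab hα0 hα1 hy
  have hCA : 0 ≤ holderMulConst a b l * holderNormM a b l α A :=
    mul_nonneg (holderMulConst_nonneg l) (holderNormM_nonneg A)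
  calc holderNormV a b l α (Lop a b A y)
      ≤ ∑ i, holderNorm a b l α (derivWithin (fun t => y t i) (Icc a b))
          + holderNormV a b l α (fun t => (A t).mulVec (y t)) := by
        rw [holderNormV, holderNormV, ← Finset.sum_add_distrib]
        exact Finset.sum_le_sum fun i _ => holderNorm_add_le hab ((hy i).derivWithin hab) (hAy i)
    _ ≤ holderNormV a b (l + 1) α y + holderMulConst a b l * holderNormM a b l α A
          * ((1 + lengthConst a b) * holderNormV a b (l + 1) α y) := by
        gcongr
        exact hmul.trans (mul_le_mul_of_nonneg_left hsucc hCA)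
    _ = _ := by ring

end HolderVector

section BoundaryValueProblem

variable {a b α : ℝ} {n m : ℕ} {A : ℝ → Matrix (Fin m) (Fin m) ℂ}
  {B : (ℝ → Fin m → ℂ) →ₗ[ℂ] (Fin m → ℂ)} {f y : ℝ → Fin m → ℂ}

def IsBVPSolution (a b : ℝ) (n : ℕ) (α : ℝ) {m : ℕ} (A : ℝ → Matrix (Fin m) (Fin m) ℂ)
    (B : (ℝ → Fin m → ℂ) →ₗ[ℂ] (Fin m → ℂ)) (f : ℝ → Fin m → ℂ) (q : Fin m → ℂ)
    (y : ℝ → Fin m → ℂ) : Prop :=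
  InHolderV a b n α f ∧ InHolderV a b (n + 1) α y ∧ SolvesV a b A y f ∧ B y = q

lemma isBVPSolution_zero : IsBVPSolution a b n α A B 0 0 0 :=
  ⟨inHolderV_const 0, inHolderV_const 0, fun t _ i => by simp [Lop], map_zero B⟩

lemma UniqSolv.exists_isBVPSolution (h : UniqSolv a b n α A B) (hf : InHolderV a b n α f)
    (q : Fin m → ℂ) : ∃ y, IsBVPSolution a b n α A B f q y :=
  let ⟨y, hy, hsol, hq, _⟩ := h f q hf
  ⟨y, hf, hy, hsol, hq⟩

lemma Lop_sub_const (c : Fin m → ℂ) (t : ℝ) :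
    Lop a b A (fun t => y t - c) t = Lop a b A y t - (A t).mulVec c := by
  ext i
  simp only [Lop, derivWithin_sub_const, Matrix.mulVec_sub, Pi.sub_apply]
  ring

lemma SolvesV.hasDerivWithinAt (hy : InHolderV a b (n + 1) α y)
    (h : SolvesV a b A y f) {t : ℝ} (ht : t ∈ Icc a b) :
    HasDerivWithinAt y (f t - (A t).mulVec (y t)) (Icc a b) t := by
  refine hasDerivWithinAt_pi.2 fun i => ?_
  rw [Pi.sub_apply, ← h t ht i, Lop, add_sub_cancel_right]
  exact ((hy i).1.differentiableOn (by simp) t ht).hasDerivWithinAt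

lemma solvesV_of_hasDerivWithinAt (hab : a < b)
    (h : ∀ t ∈ Icc a b, HasDerivWithinAt y (f t - (A t).mulVec (y t)) (Icc a b) t) :
    SolvesV a b A y f := fun t ht i => by
  rw [Lop, ((hasDerivWithinAt_pi.1 (h t ht) i).derivWithin (uniqueDiffOn_Icc hab t ht))]
  simp

lemma SolvesV.add_sum_smul (hab : a < b) {ι : Type*} (s : Finset ι) (c : ι → ℂ)
    {Z : ι → ℝ → Fin m → ℂ} (hy : InHolderV a b (n + 1) α y)
    (hZ : ∀ i ∈ s, InHolderV a b (n + 1) α (Z i)) (h : SolvesV a b A y f)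
    (hZs : ∀ i ∈ s, SolvesV a b A (Z i) 0) :
    SolvesV a b A (fun t => y t + (∑ i ∈ s, c i • Z i) t) f := by
  refine solvesV_of_hasDerivWithinAt hab fun t ht => ?_
  refine ((h.hasDerivWithinAt hy ht).add (HasDerivWithinAt.sum fun i hi =>
    ((hZs i hi).hasDerivWithinAt (hZ i hi) ht).const_smul (c i))).congr_deriv ?_
  simp [Matrix.mulVec_add, Matrix.mulVec_sum, Matrix.mulVec_smul]
  abel

end BoundaryValueProblem

lemma tendsto_zero_of_le_mul_add {ι : Type*} {l : Filter ι} {x s r : ι → ℝ} (hx : ∀ i, 0 ≤ x i)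
    (hle : ∀ᶠ i in l, x i ≤ s i * x i + r i) (hs : Tendsto s l (𝓝 0)) (hr : Tendsto r l (𝓝 0)) :
    Tendsto x l (𝓝 0) := by
  refine squeeze_zero' (.of_forall hx) ?_ (by simpa using hr.const_mul 2)
  filter_upwards [hle, hs.eventually (ge_mem_nhds (by norm_num : (0 : ℝ) < 1 / 2))] with i h1 h2
  nlinarith [hx i]

lemma norm_le_norm_map_sum_smul_add {E : Type*} [AddCommGroup E] [Module ℂ E] {m : ℕ}
    (T : E →ₗ[ℂ] (Fin m → ℂ)) {z z₀ : Fin m → E} (hz₀ : ∀ i, T (z₀ i) = Pi.single i 1)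
    (c : Fin m → ℂ) :
    ‖c‖ ≤ ‖T (∑ i, c i • z i)‖ + ‖c‖ * ∑ i, ‖T (z i - z₀ i)‖ := by
  have hc : c = T (∑ i, c i • z i) - ∑ i, c i • T (z i - z₀ i) := by
    simp only [map_sum, map_smul, map_sub, hz₀, smul_sub, Finset.sum_sub_distrib,
      sub_sub_cancel]
    ext k
    simp [Finset.sum_apply, Pi.single_apply]
  calc ‖c‖ ≤ ‖T (∑ i, c i • z i)‖ + ∑ i, ‖c i‖ * ‖T (z i - z₀ i)‖ := by
        conv_lhs => rw [hc]
        refine (norm_sub_le _ _).trans (add_le_add_right ((norm_sum_le _ _).trans ?_) _)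
        simp only [norm_smul, le_refl]
    _ ≤ _ := by
        rw [Finset.mul_sum]
        gcongr with i
        exact norm_le_pi_norm c i

section ContinuousInParam

variable {a b α ε₀ : ℝ} {n m : ℕ} {A : ℝ → ℝ → Matrix (Fin m) (Fin m) ℂ}
  {B : ℝ → (ℝ → Fin m → ℂ) →ₗ[ℂ] (Fin m → ℂ)}

lemma SolContinuousInParam.pos (h : SolContinuousInParam a b n α ε₀ A B) : 0 < ε₀ :=
  let ⟨_, h₁, h₁₀, _⟩ := h
  h₁.trans h₁₀

lemma SolContinuousInParam.eventually_uniqSolv (h : SolContinuousInParam a b n α ε₀ A B) :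
    ∀ᶠ ε in 𝓝[≥] 0, UniqSolv a b n α (A ε) (B ε) := by
  obtain ⟨ε₁, hε₁, -, hsolv, -⟩ := h
  filter_upwards [Ico_mem_nhdsGE hε₁] using hsolv

lemma SolContinuousInParam.exists_isBVPSolution_zero (h : SolContinuousInParam a b n α ε₀ A B)
    {f : ℝ → Fin m → ℂ} (hf : InHolderV a b n α f) (q : Fin m → ℂ) :
    ∃ y, IsBVPSolution a b n α (A 0) (B 0) f q y :=
  (h.eventually_uniqSolv.self_of_nhdsWithin self_mem_Ici).exists_isBVPSolution hf q

lemma SolContinuousInParam.exists_isBVPSolution (h : SolContinuousInParam a b n α ε₀ A B)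
    {f : ℝ → ℝ → Fin m → ℂ} (hf : ∀ᶠ ε in 𝓝[>] 0, InHolderV a b n α (f ε))
    (q : ℝ → Fin m → ℂ) :
    ∃ Y : ℝ → ℝ → Fin m → ℂ, ∀ᶠ ε in 𝓝[>] 0,
      IsBVPSolution a b n α (A ε) (B ε) (f ε) (q ε) (Y ε) :=
  Eventually.choice <| ((h.eventually_uniqSolv.filter_mono
    (nhdsWithin_mono _ Ioi_subset_Ici_self)).and hf).mono fun ε ⟨hu, hfε⟩ =>
      hu.exists_isBVPSolution hfε (q ε)

/-- The Basic Definition only concerns families solving the problem for every `ε ∈ [0, ε₁)`;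
away from `0` we replace the family by the zero solution of the zero problem. -/
lemma SolContinuousInParam.tendsto_holderNormV_sub (h : SolContinuousInParam a b n α ε₀ A B)
    {f : ℝ → ℝ → Fin m → ℂ} {q : ℝ → Fin m → ℂ} {Y : ℝ → ℝ → Fin m → ℂ} {y₀ : ℝ → Fin m → ℂ}
    (h₀ : IsBVPSolution a b n α (A 0) (B 0) (f 0) (q 0) y₀)
    (hY : ∀ᶠ ε in 𝓝[>] 0, IsBVPSolution a b n α (A ε) (B ε) (f ε) (q ε) (Y ε))
    (hf : CondIII a b n α f) (hq : CondIV q) :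
    Tendsto (fun ε => holderNormV a b (n + 1) α (fun t => Y ε t - y₀ t)) (𝓝[>] 0) (𝓝 0) := by
  classical
  obtain ⟨ε₁, -, -, -, hlim⟩ := h
  let P ε := IsBVPSolution a b n α (A ε) (B ε) (f ε) (q ε) (Y ε)
  let f' ε := if ε = 0 then f 0 else if P ε then f ε else 0
  let q' ε := if ε = 0 then q 0 else if P ε then q ε else 0
  let Y' ε := if ε = 0 then y₀ else if P ε then Y ε else 0
  have hsol : ∀ ε, IsBVPSolution a b n α (A ε) (B ε) (f' ε) (q' ε) (Y' ε) := fun ε => by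
    by_cases h0 : ε = 0
    · subst h0; simpa [f', q', Y'] using h₀
    by_cases hP : P ε
    · simp only [f', q', Y', if_neg h0, if_pos hP]
      exact hP
    · simpa [f', q', Y', h0, hP] using isBVPSolution_zero
  have hev : ∀ᶠ ε in 𝓝[>] 0, f' ε = f ε ∧ q' ε = q ε ∧ Y' ε = Y ε := by
    filter_upwards [hY, self_mem_nhdsWithin] with ε hε (hpos : 0 < ε)
    simp [f', q', Y', P, hpos.ne', hε]
  have hlim' := hlim f' q' Y' (fun ε _ => hsol ε)
    (hf.congr' (by filter_upwards [hev] with ε hε; simp [f', hε.1]))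
    (by simpa [CondIV, q'] using hq.congr' (by filter_upwards [hev] with ε hε; exact hε.2.1.symm))
  refine hlim'.congr' ?_
  filter_upwards [hev] with ε hε
  simp [Y', hε.2.2]

lemma condIII_const (f : ℝ → Fin m → ℂ) : CondIII a b n α (fun _ => f) := by
  simp [CondIII, holderNormV, holderNorm_zero]

lemma holderNormV_mulVec_const_le_of_solvesV (hab : a < b) (hα0 : 0 ≤ α) (hα1 : α ≤ 1)
    {A A' : ℝ → Matrix (Fin m) (Fin m) ℂ} {Y : ℝ → Fin m → ℂ} {c : Fin m → ℂ}
    (hA : InHolderM a b n α A) (hY : InHolderV a b (n + 1) α Y)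
    (hsol : SolvesV a b A Y (fun t => (A' t).mulVec c)) :
    holderNormV a b n α (fun t => (A t - A' t).mulVec c)
      ≤ (1 + holderMulConst a b n * (1 + lengthConst a b) * holderNormM a b n α A)
        * holderNormV a b (n + 1) α (fun t => Y t - c) := by
  have hEq : EqOn (fun t => (A t - A' t).mulVec c) (fun t => -Lop a b A (fun t => Y t - c) t)
      (Icc a b) := fun t ht => by
    dsimp only
    rw [Lop_sub_const, funext (hsol t ht), Matrix.sub_mulVec, neg_sub]
  rw [holderNormV_congr hEq, holderNormV_neg]
  exact holderNormV_Lop_le hab hα0 hα1 hA (hY.sub hab (inHolderV_const c))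

lemma holderNormM_eq_sum_holderNormV_mulVec_single (M : ℝ → Matrix (Fin m) (Fin m) ℂ) :
    holderNormM a b n α M = ∑ j, holderNormV a b n α (fun t => (M t).mulVec (Pi.single j 1)) := by
  rw [holderNormM, Finset.sum_comm]
  simp [holderNormV]

theorem condI_of_solContinuousInParam (hab : a < b) (hα0 : 0 ≤ α) (hα1 : α ≤ 1)
    (hA : ∀ ε ∈ Ico (0 : ℝ) ε₀, InHolderM a b n α (A ε))
    (hcont : SolContinuousInParam a b n α ε₀ A B) : CondI a b n α A := by
  have hA₀ : InHolderM a b n α (A 0) := hA 0 ⟨le_rfl, hcont.pos⟩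
  have hAε : ∀ᶠ ε in 𝓝[>] 0, InHolderM a b n α (A ε) := by
    filter_upwards [Ioo_mem_nhdsGT hcont.pos] with ε hε using hA ε (Ioo_subset_Ico_self hε)
  let e : Fin m → Fin m → ℂ := fun j => Pi.single j 1
  have hcol : ∀ j, InHolderV a b n α (fun t => (A 0 t).mulVec (e j)) := fun j =>
    InHolderV.mulVec hab hα0 hα1 hA₀ (inHolderV_const _)
  choose Y hY using fun j => hcont.exists_isBVPSolution
    (f := fun _ t => (A 0 t).mulVec (e j)) (.of_forall fun _ => hcol j)
    (fun _ => B 0 (fun _ => e j))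
  set R := fun ε => ∑ j, holderNormV a b (n + 1) α (fun t => Y j ε t - e j)
  have hR : Tendsto R (𝓝[>] 0) (𝓝 0) := by
    simpa using tendsto_finsetSum Finset.univ fun j _ => hcont.tendsto_holderNormV_sub
      (y₀ := fun _ => e j) ⟨hcol j, inHolderV_const _, fun t _ i => by simp [Lop], rfl⟩ (hY j)
      (condIII_const _) tendsto_const_nhds
  set C := holderMulConst a b n * (1 + lengthConst a b)
  set KA := holderNormM a b n α (A 0)
  refine tendsto_zero_of_le_mul_add (s := fun ε => C * R ε) (r := fun ε => (1 + C * KA) * R ε)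
    (fun ε => holderNormM_nonneg _) ?_ (by simpa using hR.const_mul C)
    (by simpa using hR.const_mul (1 + C * KA))
  filter_upwards [hAε, eventually_all.2 hY] with ε hAε hYε
  have hC : 0 ≤ C := mul_nonneg (holderMulConst_nonneg n)
    (by linarith [one_le_lengthConst (a := a) (b := b)])
  have hR0 : 0 ≤ R ε := Finset.sum_nonneg fun _ _ => holderNormV_nonneg _
  have hAε_le : holderNormM a b n α (A ε) ≤ holderNormM a b n α (fun t => A ε t - A 0 t) + KA := by
    simpa using holderNormM_add_le hab (hAε.sub hab hA₀) hA₀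
  calc holderNormM a b n α (fun t => A ε t - A 0 t)
      = ∑ j, holderNormV a b n α (fun t => (A ε t - A 0 t).mulVec (e j)) :=
        holderNormM_eq_sum_holderNormV_mulVec_single _
    _ ≤ ∑ j, (1 + C * holderNormM a b n α (A ε))
          * holderNormV a b (n + 1) α (fun t => Y j ε t - e j) :=
        Finset.sum_le_sum fun j _ => by
          simpa only [C, mul_assoc] using holderNormV_mulVec_const_le_of_solvesV hab hα0 hα1 hAε
            (hYε j).2.1 (hYε j).2.2.1
    _ = (1 + C * holderNormM a b n α (A ε)) * R ε := (Finset.mul_sum _ _ _).symm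
    _ ≤ (1 + C * (holderNormM a b n α (fun t => A ε t - A 0 t) + KA)) * R ε := by gcongr
    _ = C * R ε * holderNormM a b n α (fun t => A ε t - A 0 t) + (1 + C * KA) * R ε := by ring

lemma condIII_Lop (hab : a < b) (hα0 : 0 ≤ α) (hα1 : α ≤ 1) (hε₀ : 0 < ε₀)
    (hA : ∀ ε ∈ Ico (0 : ℝ) ε₀, InHolderM a b n α (A ε)) (hI : CondI a b n α A)
    {y : ℝ → Fin m → ℂ} (hy : InHolderV a b (n + 1) α y) :
    CondIII a b n α (fun ε => Lop a b (A ε) y) := by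
  have hA₀ : InHolderM a b n α (A 0) := hA 0 ⟨le_rfl, hε₀⟩
  have hyn := hy.of_succ hab hα0 hα1
  refine squeeze_zero' (.of_forall fun _ => holderNormV_nonneg _) ?_
    (by simpa using (hI.const_mul (holderMulConst a b n)).mul_const (holderNormV a b n α y))
  filter_upwards [Ioo_mem_nhdsGT hε₀] with ε hε
  have hL : (fun t => Lop a b (A ε) y t - Lop a b (A 0) y t)
      = fun t => (A ε t - A 0 t).mulVec (y t) := by
    ext t i
    simp [Lop, Matrix.sub_mulVec]
  rw [hL]
  exact holderNormV_mulVec_le hab hα0 hα1 ((hA ε (Ioo_subset_Ico_self hε)).sub hab hA₀) hyn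

theorem condII_of_solContinuousInParam (hab : a < b) (hα0 : 0 ≤ α) (hα1 : α ≤ 1)
    (hA : ∀ ε ∈ Ico (0 : ℝ) ε₀, InHolderM a b n α (A ε))
    (hB : ∃ K : ℝ, ∀ y : ℝ → Fin m → ℂ,
      InHolderV a b (n + 1) α y → ‖B 0 y‖ ≤ K * holderNormV a b (n + 1) α y)
    (hcont : SolContinuousInParam a b n α ε₀ A B) : CondII a b n α B := by
  intro y hy
  obtain ⟨K, hK⟩ := hB
  have hAε : ∀ᶠ ε in 𝓝[>] 0, InHolderM a b n α (A ε) := by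
    filter_upwards [Ioo_mem_nhdsGT hcont.pos] with ε hε using hA ε (Ioo_subset_Ico_self hε)
  choose Z hZ using fun i : Fin m => hcont.exists_isBVPSolution (f := fun _ => 0)
    (.of_forall fun _ => inHolderV_const 0) (fun _ => Pi.single i 1)
  choose Z₀ hZ₀ using fun i : Fin m =>
    hcont.exists_isBVPSolution_zero (inHolderV_const 0) (Pi.single i 1)
  have hZlim : ∀ i, Tendsto (fun ε => holderNormV a b (n + 1) α (fun t => Z i ε t - Z₀ i t))
      (𝓝[>] 0) (𝓝 0) := fun i =>
    hcont.tendsto_holderNormV_sub (hZ₀ i) (hZ i) (condIII_const 0) tendsto_const_nhds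
  set c := fun ε => B 0 y - B ε y
  set D := fun ε => ∑ i, c ε i • Z i ε
  have hD : Tendsto (fun ε => holderNormV a b (n + 1) α (D ε)) (𝓝[>] 0) (𝓝 0) := by
    have hsol : ∀ᶠ ε in 𝓝[>] 0, IsBVPSolution a b n α (A ε) (B ε) (Lop a b (A ε) y) (B 0 y)
        (fun t => y t + D ε t) := by
      filter_upwards [hAε, eventually_all.2 hZ] with ε hAε hZε
      refine ⟨inHolderV_Lop hab hα0 hα1 hAε hy,
        hy.add hab (InHolderV.sum_smul hab _ _ fun i _ => (hZε i).2.1),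
        SolvesV.add_sum_smul hab _ _ hy (fun i _ => (hZε i).2.1) (fun _ _ _ => rfl)
          (fun i _ => (hZε i).2.2.1), ?_⟩
      change B ε (y + D ε) = B 0 y
      ext k
      simp [D, c, (hZε _).2.2.2, Pi.single_apply]
    simpa using hcont.tendsto_holderNormV_sub
      ⟨inHolderV_Lop hab hα0 hα1 (hA 0 ⟨le_rfl, hcont.pos⟩) hy, hy, fun _ _ _ => rfl, rfl⟩ hsol
      (condIII_Lop hab hα0 hα1 hcont.pos hA
        (condI_of_solContinuousInParam hab hα0 hα1 hA hcont) hy) tendsto_const_nhds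
  rw [tendsto_iff_norm_sub_tendsto_zero]
  refine tendsto_zero_of_le_mul_add
    (s := fun ε => ∑ i, K * holderNormV a b (n + 1) α (fun t => Z i ε t - Z₀ i t))
    (r := fun ε => K * holderNormV a b (n + 1) α (D ε)) (fun _ => norm_nonneg _) ?_
    (by simpa using tendsto_finsetSum _ fun i _ => (hZlim i).const_mul K)
    (by simpa using hD.const_mul K)
  filter_upwards [eventually_all.2 hZ] with ε hZε
  rw [norm_sub_rev]
  calc ‖c ε‖ ≤ ‖B 0 (D ε)‖ + ‖c ε‖ * ∑ i, ‖B 0 (Z i ε - Z₀ i)‖ :=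
        norm_le_norm_map_sum_smul_add (B 0) (fun i => (hZ₀ i).2.2.2) (c ε)
    _ ≤ K * holderNormV a b (n + 1) α (D ε)
          + ‖c ε‖ * ∑ i, K * holderNormV a b (n + 1) α (fun t => Z i ε t - Z₀ i t) := by
        gcongr with i
        · exact hK _ (InHolderV.sum_smul hab _ _ fun i _ => (hZε i).2.1)
        · exact hK _ ((hZε i).2.1.sub hab (hZ₀ i).2.1)
    _ = _ := by ring

end ContinuousInParam

theorem statement11_general (a b : ℝ) (hab : a < b) (n m : ℕ)
    (α : ℝ) (hα0 : 0 ≤ α) (hα1 : α ≤ 1) (ε₀ : ℝ)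
    (A : ℝ → ℝ → Matrix (Fin m) (Fin m) ℂ)
    (B : ℝ → (ℝ → Fin m → ℂ) →ₗ[ℂ] (Fin m → ℂ))
    (hA : ∀ ε ∈ Set.Ico (0:ℝ) ε₀, InHolderM a b n α (A ε))
    (hB : ∀ ε ∈ Set.Ico (0:ℝ) ε₀, ∃ K : ℝ, ∀ y : ℝ → Fin m → ℂ,
      InHolderV a b (n + 1) α y → ‖B ε y‖ ≤ K * holderNormV a b (n + 1) α y)
    (hcont : SolContinuousInParam a b n α ε₀ A B) :
    CondI a b n α A ∧ CondII a b n α B :=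
  ⟨condI_of_solContinuousInParam hab hα0 hα1 hA hcont,
    condII_of_solContinuousInParam hab hα0 hα1 hA (hB 0 ⟨le_rfl, hcont.pos⟩) hcont⟩

/-- Lemma 4.4: if the solution of the family of boundary-value problems is
continuous in the parameter `ε` at `ε = 0` (Basic Definition), then the family satisfies Limit
Conditions (I) and (II). -/
theorem statement11 (a b : ℝ) (hab : a < b) (n m : ℕ) (hm : 1 ≤ m)
    (α : ℝ) (hα0 : 0 ≤ α) (hα1 : α ≤ 1) (ε₀ : ℝ) (hε₀ : 0 < ε₀)
    (A : ℝ → ℝ → Matrix (Fin m) (Fin m) ℂ)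
    (B : ℝ → (ℝ → Fin m → ℂ) →ₗ[ℂ] (Fin m → ℂ))
    (hA : ∀ ε ∈ Set.Ico (0:ℝ) ε₀, InHolderM a b n α (A ε))
    (hB : ∀ ε ∈ Set.Ico (0:ℝ) ε₀, ∃ K : ℝ, ∀ y : ℝ → Fin m → ℂ,
      InHolderV a b (n + 1) α y → ‖B ε y‖ ≤ K * holderNormV a b (n + 1) α y)
    (hcont : SolContinuousInParam a b n α ε₀ A B) :
    CondI a b n α A ∧ CondII a b n α B :=
  statement11_general a b hab n m α hα0 hα1 ε₀ A B hA hB hcont
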